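/- arXiv:2410.21917 — 4 statements merged into one kernel-verified Lean document; each statement's English description precedes it below -/
import Mathlib

section
/- Define the 4×4 real matrices M = [[1,0,1,1],[0,1,1,1],[0,0,0,1],[0,0,0,0]] and M' = [[0,1,1,1],[1,0,1,1],[0,0,0,1],[0,0,0,0]], and the vector w = (1,1,1,1). Then exp(tM) w = exp(tM') w for all t ∈ ℝ, even though M ≠ M'. -/
open scoped Matrix

/-- The paper's non-identifiability example: two different matrices `M ≠ M'` whose
matrix-exponential trajectories from `w = (1,1,1,1)` coincide for all times. -/
theorem unidentifiable_example :
    let M : Matrix (Fin 4) (Fin 4) ℝ :=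
      !![1, 0, 1, 1; 0, 1, 1, 1; 0, 0, 0, 1; 0, 0, 0, 0]
    let M' : Matrix (Fin 4) (Fin 4) ℝ :=
      !![0, 1, 1, 1; 1, 0, 1, 1; 0, 0, 0, 1; 0, 0, 0, 0]
    let w : Fin 4 → ℝ := fun _ => 1
    (∀ t : ℝ, (NormedSpace.exp (t • M)) *ᵥ w = (NormedSpace.exp (t • M')) *ᵥ w)
      ∧ M ≠ M' := by
  intro M M' w
  constructor
  · intro t
    letI : NormedRing (Matrix (Fin 4) (Fin 4) ℝ) := Matrix.linftyOpNormedRing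
    letI : NormedAlgebra ℝ (Matrix (Fin 4) (Fin 4) ℝ) := Matrix.linftyOpNormedAlgebra
    -- key: powers act the same on w
    have hstep : ∀ v : Fin 4 → ℝ, v = ![4,4,0,0] → M *ᵥ v = ![4,4,0,0] ∧ M' *ᵥ v = ![4,4,0,0] := by
      rintro v rfl
      constructor <;>
        · funext i
          fin_cases i <;>
            simp [M, M', Matrix.mulVec, dotProduct, Fin.sum_univ_four, Matrix.vecHead, Matrix.vecTail] <;> norm_num
    have hv : ∀ n : ℕ, M ^ (n+2) *ᵥ w = ![4,4,0,0] ∧ M' ^ (n+2) *ᵥ w = ![4,4,0,0] := by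
      intro n
      induction n with
      | zero =>
          constructor <;>
            · show _ ^ 2 *ᵥ w = _
              rw [sq, ← Matrix.mulVec_mulVec]
              funext i
              fin_cases i <;>
                simp [M, M', w, Matrix.mulVec, dotProduct, Fin.sum_univ_four, Matrix.vecHead, Matrix.vecTail] <;> norm_num
      | succ n ih =>
          constructor
          · rw [show n + 1 + 2 = (n + 2) + 1 from rfl, pow_succ', ← Matrix.mulVec_mulVec, ih.1]
            exact (hstep _ rfl).1
          · rw [show n + 1 + 2 = (n + 2) + 1 from rfl, pow_succ', ← Matrix.mulVec_mulVec, ih.2]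
            exact (hstep _ rfl).2
    have key : ∀ n : ℕ, M ^ n *ᵥ w = M' ^ n *ᵥ w := by
      intro n
      match n with
      | 0 => simp
      | 1 =>
          simp only [pow_one]
          funext i
          fin_cases i <;>
            simp [M, M', w, Matrix.mulVec, dotProduct, Fin.sum_univ_four, Matrix.vecHead, Matrix.vecTail]
      | (n+2) => rw [(hv n).1, (hv n).2]
    -- the continuous linear map A ↦ A *ᵥ w
    let L : Matrix (Fin 4) (Fin 4) ℝ →L[ℝ] (Fin 4 → ℝ) :=
      LinearMap.toContinuousLinearMap
        { toFun := fun A => A *ᵥ w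
          map_add' := fun A B => Matrix.add_mulVec A B w
          map_smul' := fun c A => Matrix.smul_mulVec c A w }
    have hL : ∀ A : Matrix (Fin 4) (Fin 4) ℝ, L A = A *ᵥ w := fun _ => rfl
    have h1 := NormedSpace.expSeries_summable' (𝕂 := ℝ) (t • M)
    have h2 := NormedSpace.expSeries_summable' (𝕂 := ℝ) (t • M')
    calc NormedSpace.exp (t • M) *ᵥ w
        = L (∑' (n : ℕ), ((n.factorial : ℝ))⁻¹ • (t • M) ^ n) := by
          rw [hL, NormedSpace.exp_eq_tsum (𝕂 := ℝ)]
      _ = ∑' (n : ℕ), L (((n.factorial : ℝ))⁻¹ • (t • M) ^ n) := L.map_tsum h1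
      _ = ∑' (n : ℕ), L (((n.factorial : ℝ))⁻¹ • (t • M') ^ n) := by
          congr 1
          funext n
          rw [hL, hL, smul_pow, smul_pow, Matrix.smul_mulVec, Matrix.smul_mulVec,
            Matrix.smul_mulVec, Matrix.smul_mulVec, key n]
      _ = L (∑' (n : ℕ), ((n.factorial : ℝ))⁻¹ • (t • M') ^ n) := (L.map_tsum h2).symm
      _ = NormedSpace.exp (t • M') *ᵥ w := by rw [hL, NormedSpace.exp_eq_tsum (𝕂 := ℝ)]
  · intro h
    have := congrFun (congrFun h 0) 0
    simp [M, M'] at this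
end

section
/- Let F be the (d+p)×(d+p) block matrix with top-left block A, top-right columns c₀ = B z₀, c₁ = BG z₀, …, c_{p−1} = BG^{p−1} z₀ / (p−1)! (column k scaled by 1/k!), and lower block the shift structure with entries (k) on the subdiagonal of the polynomial block. For y₀ = (x₀, 1, 0, …, 0), and for k = p, …, p+d−1, F^k y₀ = (A^{k−p} γ, 0, …, 0) where γ = A^p x₀ + ∑_{j=0}^{p−1} A^{p−1−j} B G^j z₀. -/
/-!
`F` is block upper triangular, `F = fromBlocks A C 0 N`, where `N` sends `m! eₘ` to
`(m+1)! eₘ₊₁` and `C` sends `m! eₘ` to `cₘ = B Gᵐ z₀`. Starting from `y₀ = (x₀, 0! e₀)`, after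
`m ≤ p` steps the bottom block is `m! eₘ` and the top block is
`Aᵐ x₀ + ∑_{j<m} A^{m-1-j} cⱼ`; at `m = p` the bottom block has left `ℝ^p`, so this top block
is `γ`, and from then on `F` acts as `A`.
-/

open Matrix Finset Nat

namespace Matrix

variable {ι κ R : Type*} [Fintype ι] [Fintype κ] [Semiring R]

theorem fromBlocks_zero₂₁_mulVec_sumElim (A : Matrix ι ι R) (C : Matrix ι κ R)
    (N : Matrix κ κ R) (u : ι → R) (v : κ → R) :
    fromBlocks A C 0 N *ᵥ Sum.elim u v = Sum.elim (A *ᵥ u + C *ᵥ v) (N *ᵥ v) := by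
  simp [fromBlocks_mulVec, Function.comp_def]

/-- Discrete variation of constants. -/
theorem fromBlocks_zero₂₁_pow_mulVec_sumElim [DecidableEq ι] [DecidableEq κ]
    (A : Matrix ι ι R) (C : Matrix ι κ R) (N : Matrix κ κ R) (u : ι → R)
    (v : ℕ → κ → R) (hv : ∀ m, N *ᵥ v m = v (m + 1)) (m : ℕ) :
    fromBlocks A C 0 N ^ m *ᵥ Sum.elim u (v 0) =
      Sum.elim (A ^ m *ᵥ u + ∑ j ∈ range m, A ^ (m - 1 - j) *ᵥ C *ᵥ v j) (v m) := by
  induction m generalizing u v with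
  | zero => simp
  | succ m ih =>
    rw [pow_succ, ← mulVec_mulVec, fromBlocks_zero₂₁_mulVec_sumElim, hv,
      ih _ (fun j => v (j + 1)) (fun j => hv (j + 1)), sum_range_succ', mulVec_add,
      mulVec_mulVec u, ← pow_succ, add_assoc, add_comm (A ^ m *ᵥ C *ᵥ v 0)]
    congr 3
    refine sum_congr rfl fun j _ => ?_
    rw [show m + 1 - 1 - (j + 1) = m - 1 - j by omega]

end Matrix

section FactorialShift

variable (K : Type*) (p : ℕ)

/-- `m! eₘ` in `K^p`, which is `0` once `m ≥ p`. -/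
def factorialSingle [Semiring K] (m : ℕ) : Fin p → K :=
  fun k => if (k : ℕ) = m then (m ! : K) else 0

def scaledShift [Semiring K] : Matrix (Fin p) (Fin p) K :=
  of fun k j => if (j : ℕ) + 1 = k then (k : K) else 0

variable {K p}

theorem factorialSingle_zero [Semiring K] (hp : 0 < p) :
    factorialSingle K p 0 = fun k => if k = ⟨0, hp⟩ then 1 else 0 := by
  ext k
  simp [factorialSingle, Fin.ext_iff]

theorem factorialSingle_self [Semiring K] : factorialSingle K p p = 0 := by
  ext k
  simp [factorialSingle, k.isLt.ne]

theorem scaledShift_mulVec_factorialSingle [Semiring K] (m : ℕ) :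
    scaledShift K p *ᵥ factorialSingle K p m = factorialSingle K p (m + 1) := by
  ext k
  simp only [mulVec, dotProduct, scaledShift, factorialSingle, of_apply, mul_ite, mul_zero]
  rw [Fin.sum_univ_eq_sum_range
    (fun j => if j = m then (if j + 1 = k then (k : K) else 0) * m ! else 0), sum_ite_eq']
  simp only [mem_range]
  split_ifs with _ _ hk' <;> first | omega | skip
  · rw [hk', factorial_succ, Nat.cast_mul]
  · exact zero_mul _
  · rfl

theorem mulVec_factorialSingle {ι : Type*} [Field K] [CharZero K] (c : ℕ → ι → K) {m : ℕ}
    (hm : m < p) : (of fun i (k : Fin p) => c k i / (k ! : K)) *ᵥ factorialSingle K p m = c m := by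
  ext i
  simp only [mulVec, dotProduct, factorialSingle, of_apply, mul_ite, mul_zero]
  rw [Fin.sum_univ_eq_sum_range (fun k => if k = m then c k i / (k ! : K) * m ! else 0),
    sum_ite_eq', if_pos (mem_range.mpr hm)]
  exact div_mul_cancel₀ _ (Nat.cast_ne_zero.mpr m.factorial_ne_zero)

end FactorialShift

theorem F_pow_mulVec_y0_general (d p : ℕ) (hp : 0 < p)
    (A : Matrix (Fin d) (Fin d) ℝ) (B : Matrix (Fin d) (Fin p) ℝ)
    (G : Matrix (Fin p) (Fin p) ℝ)
    (x₀ : Fin d → ℝ) (z₀ : Fin p → ℝ)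
    (F : Matrix (Fin d ⊕ Fin p) (Fin d ⊕ Fin p) ℝ)
    (hF11 : ∀ i j : Fin d, F (Sum.inl i) (Sum.inl j) = A i j)
    (hF12 : ∀ (i : Fin d) (k : Fin p),
      F (Sum.inl i) (Sum.inr k) = (B *ᵥ ((G ^ (k : ℕ)) *ᵥ z₀)) i / (Nat.factorial k : ℝ))
    (hF21 : ∀ (k : Fin p) (j : Fin d), F (Sum.inr k) (Sum.inl j) = 0)
    (hF22 : ∀ k j : Fin p,
      F (Sum.inr k) (Sum.inr j) = if (j : ℕ) + 1 = (k : ℕ) then ((k : ℕ) : ℝ) else 0)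
    (y₀ : Fin d ⊕ Fin p → ℝ)
    (hy₀ : y₀ = Sum.elim x₀ (fun k => if k = ⟨0, hp⟩ then 1 else 0))
    (γ : Fin d → ℝ)
    (hγ : γ = (A ^ p) *ᵥ x₀ +
      ∑ j : Fin p, (A ^ (p - 1 - (j : ℕ))) *ᵥ (B *ᵥ ((G ^ (j : ℕ)) *ᵥ z₀))) :
    ∀ k : ℕ, p ≤ k → k < p + d →
      (F ^ k) *ᵥ y₀ = Sum.elim ((A ^ (k - p)) *ᵥ γ) (fun _ => 0) := by
  set c : ℕ → Fin d → ℝ := fun j => B *ᵥ (G ^ j *ᵥ z₀)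
  have hF : F = fromBlocks A (of fun i (k : Fin p) => c k i / (k ! : ℝ)) 0 (scaledShift ℝ p) := by
    ext (i | k) (j | j) <;> simp [hF11, hF12, hF21, hF22, scaledShift, c]
  have hy : y₀ = Sum.elim x₀ (factorialSingle ℝ p 0) := by rw [hy₀, factorialSingle_zero hp]
  have hFp : F ^ p *ᵥ y₀ = Sum.elim γ 0 := by
    rw [hF, hy, fromBlocks_zero₂₁_pow_mulVec_sumElim _ _ _ _ _ scaledShift_mulVec_factorialSingle,
      factorialSingle_self, hγ, Fin.sum_univ_eq_sum_range (fun j => A ^ (p - 1 - j) *ᵥ c j)]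
    congr 2
    exact sum_congr rfl fun j hj => by rw [mulVec_factorialSingle c (mem_range.mp hj)]
  intro k hk _
  obtain ⟨n, rfl⟩ := Nat.exists_eq_add_of_le hk
  rw [add_comm p, pow_add, ← mulVec_mulVec, hFp, hF,
    fromBlocks_zero₂₁_pow_mulVec_sumElim _ _ _ _ (fun _ => 0) (fun _ => mulVec_zero _)]
  simp only [mulVec_zero, sum_const_zero, add_zero, add_tsub_cancel_right]
  rfl

/-- For the augmented matrix `F` (top row `(A, Bz₀, BGz₀, …, BG^{p−1}z₀/(p−1)!)`,
shift structure below) and `y₀ = (x₀, 1, 0, …, 0)`, for `k = p, …, p+d−1` we have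
`F^k y₀ = (A^{k−p} γ, 0, …, 0)` with `γ = A^p x₀ + ∑_{j<p} A^{p−1−j} B G^j z₀`. -/
theorem F_pow_mulVec_y0 (d p : ℕ) (hp : 0 < p)
    (A : Matrix (Fin d) (Fin d) ℝ) (B : Matrix (Fin d) (Fin p) ℝ)
    (G : Matrix (Fin p) (Fin p) ℝ) (hG : ∀ i j : Fin p, j ≤ i → G i j = 0)
    (x₀ : Fin d → ℝ) (z₀ : Fin p → ℝ)
    (F : Matrix (Fin d ⊕ Fin p) (Fin d ⊕ Fin p) ℝ)
    (hF11 : ∀ i j : Fin d, F (Sum.inl i) (Sum.inl j) = A i j)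
    (hF12 : ∀ (i : Fin d) (k : Fin p),
      F (Sum.inl i) (Sum.inr k) = (B *ᵥ ((G ^ (k : ℕ)) *ᵥ z₀)) i / (Nat.factorial k : ℝ))
    (hF21 : ∀ (k : Fin p) (j : Fin d), F (Sum.inr k) (Sum.inl j) = 0)
    (hF22 : ∀ k j : Fin p,
      F (Sum.inr k) (Sum.inr j) = if (j : ℕ) + 1 = (k : ℕ) then ((k : ℕ) : ℝ) else 0)
    (y₀ : Fin d ⊕ Fin p → ℝ)
    (hy₀ : y₀ = Sum.elim x₀ (fun k => if k = ⟨0, hp⟩ then 1 else 0))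
    (γ : Fin d → ℝ)
    (hγ : γ = (A ^ p) *ᵥ x₀ +
      ∑ j : Fin p, (A ^ (p - 1 - (j : ℕ))) *ᵥ (B *ᵥ ((G ^ (j : ℕ)) *ᵥ z₀))) :
    ∀ k : ℕ, p ≤ k → k < p + d →
      (F ^ k) *ᵥ y₀ = Sum.elim ((A ^ (k - p)) *ᵥ γ) (fun _ => 0) :=
  F_pow_mulVec_y0_general d p hp A B G x₀ z₀ F hF11 hF12 hF21 hF22 y₀ hy₀ γ hγ
end

section
/- Consider the homogeneous linear ODE ẋ = Ax with solution x(t) = exp(tA) x₀. If the set {x₀, A x₀, …, A^{d−1} x₀} is linearly independent, and (x₀', A') is another pair with exp(tA) x₀ = exp(tA') x₀' for all t ≥ 0, then x₀ = x₀' and A = A'. -/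
open scoped Matrix
open NormedSpace

attribute [local instance] Matrix.linftyOpNormedRing Matrix.linftyOpNormedAlgebra

noncomputable def mulVecCLM (d : ℕ) (v : Fin d → ℝ) :
    Matrix (Fin d) (Fin d) ℝ →L[ℝ] (Fin d → ℝ) :=
  LinearMap.toContinuousLinearMap
    { toFun := fun M => M *ᵥ v
      map_add' := fun M N => Matrix.add_mulVec M N v
      map_smul' := fun c M => Matrix.smul_mulVec c M v }

lemma hasDerivAt_exp_mulVec (d : ℕ) (A : Matrix (Fin d) (Fin d) ℝ) (v : Fin d → ℝ) (t : ℝ) :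
    HasDerivAt (fun u : ℝ => exp (u • A) *ᵥ v) (exp (t • A) *ᵥ (A *ᵥ v)) t := by
  have h1 := (hasDerivAt_exp_smul_const (𝕂 := ℝ) A t)
  have h2 := (mulVecCLM d v).hasFDerivAt.comp_hasDerivAt t h1
  exact h2.congr_deriv (by rw [Matrix.mulVec_mulVec]; rfl)

lemma key (d : ℕ)
    (A A' : Matrix (Fin d) (Fin d) ℝ) (x₀ x₀' : Fin d → ℝ)
    (heq : ∀ t : ℝ, 0 ≤ t →
      (exp (t • A)) *ᵥ x₀ = (exp (t • A')) *ᵥ x₀') (n : ℕ) :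
    (A ^ n) *ᵥ x₀ = (A' ^ n) *ᵥ x₀' := by
  have main : ∀ n : ℕ, ∀ t : ℝ, 0 < t →
      exp (t • A) *ᵥ ((A ^ n) *ᵥ x₀) = exp (t • A') *ᵥ ((A' ^ n) *ᵥ x₀') := by
    intro n
    induction n with
    | zero => intro t ht; simpa using heq t ht.le
    | succ n ih =>
      intro t ht
      have hF := hasDerivAt_exp_mulVec d A ((A ^ n) *ᵥ x₀) t
      have hG := hasDerivAt_exp_mulVec d A' ((A' ^ n) *ᵥ x₀') t
      have hev : (fun u : ℝ => exp (u • A) *ᵥ ((A ^ n) *ᵥ x₀)) =ᶠ[nhds t]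
          fun u : ℝ => exp (u • A') *ᵥ ((A' ^ n) *ᵥ x₀') := by
        filter_upwards [Ioi_mem_nhds ht] with u hu using ih u hu
      have hthis := (hG.congr_of_eventuallyEq hev).unique hF
      have cA : exp (t • A) * A = A * exp (t • A) :=
        ((Commute.refl A).smul_left t).exp_left |>.eq
      have cA' : exp (t • A') * A' = A' * exp (t • A') :=
        ((Commute.refl A').smul_left t).exp_left |>.eq
      simp only [Matrix.mulVec_mulVec, ← Matrix.mul_assoc] at hthis ⊢
      rw [cA, cA'] at hthis
      calc (exp (t • A) * A ^ (n + 1)) *ᵥ x₀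
          = (A * exp (t • A) * A ^ n) *ᵥ x₀ := by
            rw [pow_succ', ← Matrix.mul_assoc, cA]
        _ = (A' * exp (t • A') * A' ^ n) *ᵥ x₀' := hthis.symm
        _ = (exp (t • A') * A' ^ (n + 1)) *ᵥ x₀' := by
            rw [pow_succ', ← Matrix.mul_assoc, cA']
  have hFc : Filter.Tendsto (fun t : ℝ => exp (t • A) *ᵥ ((A ^ n) *ᵥ x₀))
      (nhdsWithin 0 (Set.Ioi 0)) (nhds ((A ^ n) *ᵥ x₀)) := by
    have := (hasDerivAt_exp_mulVec d A ((A ^ n) *ᵥ x₀) 0).continuousAt.tendsto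
    simp only [zero_smul, exp_zero, Matrix.one_mulVec] at this
    exact this.mono_left nhdsWithin_le_nhds
  have hGc : Filter.Tendsto (fun t : ℝ => exp (t • A') *ᵥ ((A' ^ n) *ᵥ x₀'))
      (nhdsWithin 0 (Set.Ioi 0)) (nhds ((A' ^ n) *ᵥ x₀')) := by
    have := (hasDerivAt_exp_mulVec d A' ((A' ^ n) *ᵥ x₀') 0).continuousAt.tendsto
    simp only [zero_smul, exp_zero, Matrix.one_mulVec] at this
    exact this.mono_left nhdsWithin_le_nhds
  have heq' : Filter.Tendsto (fun t : ℝ => exp (t • A) *ᵥ ((A ^ n) *ᵥ x₀))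
      (nhdsWithin 0 (Set.Ioi 0)) (nhds ((A' ^ n) *ᵥ x₀')) := by
    refine hGc.congr' ?_
    filter_upwards [self_mem_nhdsWithin] with t ht using (main n t ht).symm
  exact tendsto_nhds_unique hFc heq'

/-- Identifiability of `ẋ = Ax`: if `x₀, Ax₀, …, A^{d−1}x₀` are linearly independent
and the trajectories of `(x₀, A)` and `(x₀', A')` agree for all `t ≥ 0`, then
`x₀ = x₀'` and `A = A'`. -/
theorem linear_ODE_identifiable (d : ℕ)
    (A A' : Matrix (Fin d) (Fin d) ℝ) (x₀ x₀' : Fin d → ℝ)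
    (h : LinearIndependent ℝ fun k : Fin d => (A ^ (k : ℕ)) *ᵥ x₀)
    (heq : ∀ t : ℝ, 0 ≤ t →
      (NormedSpace.exp (t • A)) *ᵥ x₀ = (NormedSpace.exp (t • A')) *ᵥ x₀') :
    x₀ = x₀' ∧ A = A' := by
  rcases Nat.eq_zero_or_pos d with hd | hd
  · subst hd
    exact ⟨funext fun i => i.elim0, Matrix.ext fun i _ => i.elim0⟩
  haveI : Nonempty (Fin d) := ⟨⟨0, hd⟩⟩
  have hn : ∀ n : ℕ, (A ^ n) *ᵥ x₀ = (A' ^ n) *ᵥ x₀' := key d A A' x₀ x₀' heq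
  have hx : x₀ = x₀' := by simpa using hn 0
  have hcard : Fintype.card (Fin d) = Module.finrank ℝ (Fin d → ℝ) := by simp
  let b := basisOfLinearIndependentOfCardEqFinrank h hcard
  have hb : ∀ k : Fin d, b k = (A ^ (k : ℕ)) *ᵥ x₀ := fun k =>
    congrFun (coe_basisOfLinearIndependentOfCardEqFinrank h hcard) k
  have hAb : ∀ k : Fin d, A *ᵥ (b k) = A' *ᵥ (b k) := by
    intro k
    rw [hb, Matrix.mulVec_mulVec, Matrix.mulVec_mulVec, ← pow_succ', hn (k + 1), pow_succ',
      ← Matrix.mulVec_mulVec, ← hn k, ← Matrix.mulVec_mulVec]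
  have hlin : Matrix.toLin' A = Matrix.toLin' A' := b.ext fun k => by
    simpa [Matrix.toLin'_apply] using hAb k
  exact ⟨hx, Matrix.toLin'.injective hlin⟩
end

section
/- If {x₀, A x₀, …, A^{d−1} x₀} is linearly dependent in ℝ^d, then there exists a pair (x₀', A') ≠ (x₀, A) with exp(tA) x₀ = exp(tA') x₀' for all t. -/
open scoped Matrix

/-- Multiplication by a fixed vector on the right, as a linear map in the matrix. -/
def mulVecR {d : ℕ} (x : Fin d → ℝ) : Matrix (Fin d) (Fin d) ℝ →ₗ[ℝ] (Fin d → ℝ) where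
  toFun M := M *ᵥ x
  map_add' M N := Matrix.add_mulVec M N x
  map_smul' c M := Matrix.smul_mulVec c M x

/-- If two matrices have the same Krylov sequence at `x₀` resp. `x₀'`, the matrix
exponentials agree along trajectories. -/
theorem exp_mulVec_eq_of_pow_eq {d : ℕ} (A A' : Matrix (Fin d) (Fin d) ℝ)
    (x₀ x₀' : Fin d → ℝ) (hp : ∀ n : ℕ, (A ^ n) *ᵥ x₀ = (A' ^ n) *ᵥ x₀') (t : ℝ) :
    (NormedSpace.exp (t • A)) *ᵥ x₀ = (NormedSpace.exp (t • A')) *ᵥ x₀' := by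
  letI : SeminormedRing (Matrix (Fin d) (Fin d) ℝ) := Matrix.linftyOpSemiNormedRing
  letI : NormedRing (Matrix (Fin d) (Fin d) ℝ) := Matrix.linftyOpNormedRing
  letI : NormedAlgebra ℝ (Matrix (Fin d) (Fin d) ℝ) := Matrix.linftyOpNormedAlgebra
  have key : ∀ (M : Matrix (Fin d) (Fin d) ℝ) (x : Fin d → ℝ),
      (NormedSpace.exp (t • M)) *ᵥ x
        = ∑' n : ℕ, (n.factorial : ℝ)⁻¹ • t ^ n • ((M ^ n) *ᵥ x) := by
    intro M x
    have hs : Summable fun n : ℕ => ((n.factorial : ℝ)⁻¹ : ℝ) • (t • M) ^ n :=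
      NormedSpace.expSeries_summable' (𝕂 := ℝ) (t • M)
    have hmap := (LinearMap.toContinuousLinearMap (mulVecR x)).map_tsum hs
    rw [NormedSpace.exp_eq_tsum (𝕂 := ℝ)]
    refine hmap.trans ?_
    refine tsum_congr fun n => ?_
    simp [mulVecR, smul_pow, Matrix.smul_mulVec]
  rw [key A x₀, key A' x₀']
  exact tsum_congr fun n => by rw [hp n]

/-- Non-identifiability: if `x₀, Ax₀, …, A^{d−1}x₀` are linearly dependent, then some
other pair `(x₀', A') ≠ (x₀, A)` produces the same trajectory. -/
theorem linear_ODE_not_identifiable (d : ℕ) (hd : 1 ≤ d)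
    (A : Matrix (Fin d) (Fin d) ℝ) (x₀ : Fin d → ℝ)
    (h : ¬ LinearIndependent ℝ fun k : Fin d => (A ^ (k : ℕ)) *ᵥ x₀) :
    ∃ (x₀' : Fin d → ℝ) (A' : Matrix (Fin d) (Fin d) ℝ),
      (x₀', A') ≠ (x₀, A) ∧
      ∀ t : ℝ, (NormedSpace.exp (t • A)) *ᵥ x₀
        = (NormedSpace.exp (t • A')) *ᵥ x₀' := by
  classical
  set W : Submodule ℝ (Fin d → ℝ) :=
    Submodule.span ℝ (Set.range fun k : Fin d => (A ^ (k : ℕ)) *ᵥ x₀) with hWdef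
  have hmem : ∀ k : Fin d, (A ^ (k : ℕ)) *ᵥ x₀ ∈ W :=
    fun k => Submodule.subset_span ⟨k, rfl⟩
  -- every Krylov vector lies in W, via Cayley–Hamilton
  have key : ∀ n : ℕ, (A ^ n) *ᵥ x₀ ∈ W := by
    intro n
    induction n using Nat.strong_induction_on with
    | _ n ih =>
      rcases lt_or_ge n d with hn | hn
      · exact hmem ⟨n, hn⟩
      · -- use Cayley–Hamilton: A ^ d = -∑ i < d, c i • A ^ i
        have hdeg : A.charpoly.natDegree = d := by
          simpa using A.charpoly_natDegree_eq_dim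
        have hCH : (0 : Matrix (Fin d) (Fin d) ℝ)
            = ∑ i ∈ Finset.range (d + 1), A.charpoly.coeff i • A ^ i := by
          have := Polynomial.aeval_eq_sum_range (p := A.charpoly) A
          rw [Matrix.aeval_self_charpoly, hdeg] at this
          simpa using this
        have hlead : A.charpoly.coeff d = 1 := by
          have := A.charpoly_monic
          rw [Polynomial.Monic, Polynomial.leadingCoeff, hdeg] at this
          exact this
        rw [Finset.sum_range_succ, hlead, one_smul] at hCH
        have hAd : A ^ d = -∑ i ∈ Finset.range d, A.charpoly.coeff i • A ^ i :=
          eq_neg_of_add_eq_zero_right hCH.symm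
        have hpow : A ^ n = A ^ (n - d) * A ^ d := by
          rw [← pow_add]; congr 1; omega
        have h1 : (A ^ n) *ᵥ x₀
            = (A ^ (n - d)) *ᵥ ((A ^ d) *ᵥ x₀) := by
          rw [hpow, ← Matrix.mulVec_mulVec]
        rw [h1, hAd]
        have h2 : (-∑ i ∈ Finset.range d, A.charpoly.coeff i • A ^ i) *ᵥ x₀
            = -∑ i ∈ Finset.range d, A.charpoly.coeff i • ((A ^ i) *ᵥ x₀) := by
          have := map_neg (mulVecR x₀) (∑ i ∈ Finset.range d, A.charpoly.coeff i • A ^ i)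
          rw [map_sum] at this
          simpa [mulVecR] using this
        rw [h2]
        have h3 : (A ^ (n - d)) *ᵥ
            (-∑ i ∈ Finset.range d, A.charpoly.coeff i • ((A ^ i) *ᵥ x₀))
            = -∑ i ∈ Finset.range d, A.charpoly.coeff i • ((A ^ (n - d + i)) *ᵥ x₀) := by
          have := map_neg (Matrix.mulVecLin (A ^ (n - d)))
            (∑ i ∈ Finset.range d, A.charpoly.coeff i • ((A ^ i) *ᵥ x₀))
          rw [map_sum] at this
          simpa [Matrix.mulVec_mulVec, ← pow_add] using this
        rw [h3]
        refine neg_mem (Submodule.sum_mem _ fun i hi => Submodule.smul_mem _ _ ?_)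
        exact ih (n - d + i) (by have := Finset.mem_range.mp hi; omega)
  -- W is a proper subspace
  have hWne : W ≠ ⊤ := by
    intro htop
    apply h
    rw [linearIndependent_iff_card_eq_finrank_span]
    rw [Set.finrank, ← hWdef, htop, finrank_top]
    simp
  obtain ⟨v, hv⟩ : ∃ v, v ∉ W := by
    by_contra hc
    push_neg at hc
    exact hWne (Submodule.eq_top_iff'.mpr hc)
  have hv0 : v ≠ 0 := fun hv0 => hv (hv0 ▸ W.zero_mem)
  -- a functional vanishing on W but not at v
  have hq : (W.mkQ v) ≠ 0 := by
    rw [Submodule.mkQ_apply, ne_eq, Submodule.Quotient.mk_eq_zero]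
    exact hv
  obtain ⟨g, hg⟩ : ∃ g : ((Fin d → ℝ) ⧸ W) →ₗ[ℝ] ℝ, g (W.mkQ v) ≠ 0 := by
    by_contra hc
    push_neg at hc
    exact hq ((Module.forall_dual_apply_eq_zero_iff ℝ _).mp hc)
  set f : (Fin d → ℝ) →ₗ[ℝ] ℝ := g.comp W.mkQ with hfdef
  have hfW : ∀ w ∈ W, f w = 0 := by
    intro w hw
    have : W.mkQ w = 0 := (Submodule.Quotient.mk_eq_zero _).mpr hw
    simp [hfdef, this]
  have hfv : f v ≠ 0 := hg
  -- the perturbation matrix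
  set B : Matrix (Fin d) (Fin d) ℝ :=
    Matrix.of fun i j => v i * f (Pi.single j 1) with hBdef
  have hf_expand : ∀ w : Fin d → ℝ, f w = ∑ j, w j * f (Pi.single j 1) := by
    intro w
    conv_lhs => rw [← Finset.univ_sum_single w]
    rw [map_sum]
    refine Finset.sum_congr rfl fun j _ => ?_
    have : Pi.single j (w j) = w j • (Pi.single j 1 : Fin d → ℝ) := by
      rw [← Pi.single_smul, smul_eq_mul, mul_one]
    rw [this, map_smul, smul_eq_mul]
  have hBv : ∀ w : Fin d → ℝ, B *ᵥ w = f w • v := by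
    intro w
    funext i
    simp only [Matrix.mulVec, dotProduct, hBdef, Matrix.of_apply, Pi.smul_apply,
      smul_eq_mul, hf_expand w, Finset.sum_mul]
    refine Finset.sum_congr rfl fun j _ => by ring
  have hB0 : B ≠ 0 := by
    intro hB
    have : B *ᵥ v = f v • v := hBv v
    rw [hB, Matrix.zero_mulVec] at this
    exact smul_ne_zero hfv hv0 this.symm
  refine ⟨x₀, A + B, ?_, ?_⟩
  · intro hEq
    have hAB : A + B = A := congrArg Prod.snd hEq
    exact hB0 (add_eq_left.mp hAB)
  · have hp : ∀ n : ℕ, (A ^ n) *ᵥ x₀ = ((A + B) ^ n) *ᵥ x₀ := by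
      intro n
      induction n with
      | zero => simp
      | succ n ih =>
        rw [pow_succ', pow_succ', ← Matrix.mulVec_mulVec, ← Matrix.mulVec_mulVec, ← ih,
          Matrix.add_mulVec, hBv, hfW _ (key n), zero_smul, add_zero]
    exact fun t => exp_mulVec_eq_of_pow_eq A (A + B) x₀ x₀ hp t
end
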